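/- arXiv:2201.05661 — 2 statements merged into one kernel-verified Lean document; each statement's English description precedes it below -/
import Mathlib

section
/- Let f̃ : ℝ² → ℝ² be a lift of a torus homeomorphism f, D̃ ⊂ ℝ² an f̃-invariant open set such that distinct integer translates of D̃ are pairwise disjoint, and x̃ ∈ D̃ a point such that x = π(x̃) is f-recurrent. Then the pointwise rotation vector of x, if it exists, equals (0,0). -/
open Filter Set

abbrev R2 := ℝ × ℝ

abbrev T2 := AddCircle (1 : ℝ) × AddCircle (1 : ℝ)

noncomputable def pi2 (x : R2) : T2 :=
  ((x.1 : AddCircle (1 : ℝ)), (x.2 : AddCircle (1 : ℝ)))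

def ivec (v : ℤ × ℤ) : R2 := ((v.1 : ℝ), (v.2 : ℝ))

/-- If `D̃` is an `f̃`-invariant open set whose integer translates are pairwise disjoint and
`x̃ ∈ D̃` projects to an `f`-recurrent point, then the rotation vector of `x`, if it
exists, is `(0,0)`. -/
theorem stmt10 (f : T2 → T2) (hf : Continuous f)
    (ftilde : R2 → R2) (hftc : Continuous ftilde)
    (hcomm : ∀ (x : R2) (v : ℤ × ℤ), ftilde (x + ivec v) = ftilde x + ivec v)
    (hlift : ∀ x : R2, pi2 (ftilde x) = f (pi2 x))
    (D : Set R2) (hDopen : IsOpen D) (hDinv : ftilde '' D = D)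
    (hDdisj : ∀ v : ℤ × ℤ, v ≠ 0 → Disjoint ((fun y => y + ivec v) '' D) D)
    (x : R2) (hxD : x ∈ D)
    (hrec : ∃ n : ℕ → ℕ, Tendsto n atTop atTop ∧
      Tendsto (fun k => f^[n k] (pi2 x)) atTop (nhds (pi2 x))) :
    ∀ ρ : R2,
      Tendsto (fun n : ℕ => (n : ℝ)⁻¹ • (ftilde^[n] x - x)) atTop (nhds ρ) → ρ = 0 := by
  intro ρ hρ
  obtain ⟨n, hn, hconv⟩ := hrec
  -- the lift intertwines iterates
  have hliftn : ∀ (m : ℕ) (z : R2), pi2 (ftilde^[m] z) = f^[m] (pi2 z) := by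
    intro m
    induction m with
    | zero => intro z; simp
    | succ m ih =>
      intro z
      rw [Function.iterate_succ_apply', Function.iterate_succ_apply', hlift, ih]
  -- iterates stay in D
  have hDsub : ∀ z ∈ D, ftilde z ∈ D := fun z hz => hDinv ▸ mem_image_of_mem _ hz
  have hyD : ∀ m : ℕ, ftilde^[m] x ∈ D := by
    intro m
    induction m with
    | zero => simpa using hxD
    | succ m ih => rw [Function.iterate_succ_apply']; exact hDsub _ ih
  set y : ℕ → R2 := fun k => ftilde^[n k] x with hy
  have hconv' : Tendsto (fun k => pi2 (y k)) atTop (nhds (pi2 x)) := by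
    simpa only [hy, hliftn] using hconv
  -- coordinate displacement
  set d1 : ℕ → ℝ := fun k => (y k).1 - x.1 with hd1
  set d2 : ℕ → ℝ := fun k => (y k).2 - x.2 with hd2
  set w : ℕ → ℤ × ℤ := fun k => (round (d1 k), round (d2 k)) with hw
  -- first coordinate of the projection converges
  have hc1 : Tendsto (fun k => ((d1 k : ℝ) : AddCircle (1 : ℝ))) atTop (nhds 0) := by
    have h1 : Tendsto (fun k => (pi2 (y k)).1) atTop (nhds (pi2 x).1) :=
      (continuous_fst.tendsto _).comp hconv'
    have := h1.sub (tendsto_const_nhds (x := (pi2 x).1))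
    simpa [pi2, hd1, QuotientAddGroup.mk_sub] using this
  have hc2 : Tendsto (fun k => ((d2 k : ℝ) : AddCircle (1 : ℝ))) atTop (nhds 0) := by
    have h1 : Tendsto (fun k => (pi2 (y k)).2) atTop (nhds (pi2 x).2) :=
      (continuous_snd.tendsto _).comp hconv'
    have := h1.sub (tendsto_const_nhds (x := (pi2 x).2))
    simpa [pi2, hd2, QuotientAddGroup.mk_sub] using this
  -- extract real convergence of the fractional parts
  have key : ∀ (d : ℕ → ℝ), Tendsto (fun k => ((d k : ℝ) : AddCircle (1 : ℝ))) atTop (nhds 0) →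
      Tendsto (fun k => d k - round (d k)) atTop (nhds 0) := by
    intro d hd
    have hnorm : Tendsto (fun k => ‖((d k : ℝ) : AddCircle (1 : ℝ))‖) atTop (nhds 0) := by
      simpa using (tendsto_zero_iff_norm_tendsto_zero.mp hd)
    have heq : ∀ k, ‖((d k : ℝ) : AddCircle (1 : ℝ))‖ = |d k - round (d k)| := by
      intro k
      rw [AddCircle.norm_eq]
      norm_num
    rw [show (fun k => ‖((d k : ℝ) : AddCircle (1 : ℝ))‖) = fun k => |d k - round (d k)| from
      funext heq] at hnorm
    exact tendsto_zero_iff_abs_tendsto_zero (fun k => d k - round (d k)) |>.mpr hnorm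
  have k1 := key d1 hc1
  have k2 := key d2 hc2
  -- translated sequence converges to x
  have htr : Tendsto (fun k => y k - ivec (w k)) atTop (nhds x) := by
    have h1 : Tendsto (fun k => (y k).1 - (round (d1 k) : ℝ)) atTop (nhds x.1) := by
      have := k1.add (tendsto_const_nhds (x := x.1))
      simpa [hd1, sub_right_comm, sub_add_eq_add_sub] using this
    have h2 : Tendsto (fun k => (y k).2 - (round (d2 k) : ℝ)) atTop (nhds x.2) := by
      have := k2.add (tendsto_const_nhds (x := x.2))
      simpa [hd2, sub_right_comm, sub_add_eq_add_sub] using this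
    have := h1.prodMk_nhds h2
    simpa [ivec, hw, Prod.sub_def] using this
  -- eventually, the translated sequence is in D, forcing w k = 0
  have hmemD : ∀ᶠ k in atTop, y k - ivec (w k) ∈ D :=
    htr (hDopen.mem_nhds hxD)
  have hw0 : ∀ᶠ k in atTop, w k = 0 := by
    filter_upwards [hmemD] with k hk
    by_contra hne
    have hyim : y k ∈ (fun z => z + ivec (w k)) '' D :=
      ⟨y k - ivec (w k), hk, by simp⟩
    exact (hDdisj (w k) hne).le_bot ⟨hyim, hyD (n k)⟩
  have hytend : Tendsto y atTop (nhds x) := by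
    refine htr.congr' ?_
    filter_upwards [hw0] with k hk
    rw [hk]
    show y k - ((((0:ℤ×ℤ).1 : ℝ)), (((0:ℤ×ℤ).2 : ℝ))) = y k
    simp
  -- the subsequence of rotation averages converges to 0
  have hninv : Tendsto (fun k => ((n k : ℝ))⁻¹) atTop (nhds 0) :=
    tendsto_inv_atTop_zero.comp (tendsto_natCast_atTop_atTop.comp hn)
  have hy0 : Tendsto (fun k => y k - x) atTop (nhds 0) := by
    simpa using hytend.sub (tendsto_const_nhds (x := x))
  have hsmall : Tendsto (fun k => ((n k : ℝ))⁻¹ • (y k - x)) atTop (nhds 0) := by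
    simpa using hninv.smul hy0
  have hsub : Tendsto (fun k => ((n k : ℝ))⁻¹ • (ftilde^[n k] x - x)) atTop (nhds ρ) :=
    hρ.comp hn
  exact tendsto_nhds_unique hsub hsmall
end

section
/- Let f : T² → T² be a homeomorphism and let W ⊂ T² be an open f-invariant set whose complement is inessential, i.e., contained in a finite union of topological open disks each of which lifts homeomorphically to ℝ². Suppose there is R > 0 such that for every x ∈ W and every lift x̃, pr_v(f̃ⁿ(x̃) − x̃) ≤ R for all n ≥ 0, where f̃ is a lift of f and v a fixed unit vector. Then there exists R′ > 0 such that pr_v(f̃ⁿ(x̃) − x̃) ≤ R′ for every x̃ ∈ ℝ² and all n ≥ 0. -/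
open Filter Set

def dot (a b : R2) : ℝ := a.1 * b.1 + a.2 * b.2

/-!
A point outside `W` has a lift `y` in one of the bounded lifted disks `U`. Among the points of
`closure U`, the one whose `n`-th image goes farthest in the direction `v` lies on the frontier
of `U`, since the image of the open set `U` is open and a nonzero linear functional has no
maximum on an open set. That frontier point projects into the frontier of the disk, hence into
`W`, where displacements are bounded by `R`; comparing `y` with it costs at most
`‖⟨·, v⟩‖ * diam U`.
-/

theorem IsOpenMap.iterate {X : Type*} [TopologicalSpace X] {g : X → X} (hg : IsOpenMap g)
    (n : ℕ) : IsOpenMap g^[n] := by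
  induction n with
  | zero => exact IsOpenMap.id
  | succ n ih => rw [Function.iterate_succ']; exact hg.comp ih

section Frontier

variable {E : Type*} [NormedAddCommGroup E] [NormedSpace ℝ E] [ProperSpace E]

theorem exists_mem_frontier_isMaxOn_comp {g : E → E} (hg : Continuous g)
    (hgo : IsOpenMap g) {ℓ : E →L[ℝ] ℝ} (hℓ : ℓ ≠ 0) {U : Set E} (hU : IsOpen U)
    (hUb : Bornology.IsBounded U) (hne : U.Nonempty) :
    ∃ q ∈ frontier U, IsMaxOn (fun y => ℓ (g y)) (closure U) q := by
  obtain ⟨q, hq, hmax⟩ := hUb.isCompact_closure.exists_isMaxOn hne.closure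
    (ℓ.continuous.comp hg).continuousOn
  refine ⟨q, ?_, hmax⟩
  rw [hU.frontier_eq]
  refine ⟨hq, fun hqU => hℓ ?_⟩
  have hmax' : IsMaxOn ℓ (g '' U) (g q) := by
    rintro _ ⟨y, hy, rfl⟩
    exact hmax (subset_closure hy)
  exact (hmax'.isLocalMax ((hgo U hU).mem_nhds (mem_image_of_mem g hqU))).hasFDerivAt_eq_zero
    ℓ.hasFDerivAt

theorem exists_mem_frontier_displacement_le {g : E → E} (hg : Continuous g)
    (hgo : IsOpenMap g) {ℓ : E →L[ℝ] ℝ} (hℓ : ℓ ≠ 0) {U : Set E} (hU : IsOpen U)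
    (hUb : Bornology.IsBounded U) {y : E} (hy : y ∈ U) :
    ∃ q ∈ frontier U, ℓ (g y - y) ≤ ℓ (g q - q) + ‖ℓ‖ * Metric.diam U := by
  obtain ⟨q, hq, hmax⟩ := exists_mem_frontier_isMaxOn_comp hg hgo hℓ hU hUb ⟨y, hy⟩
  refine ⟨q, hq, ?_⟩
  have hdist : ‖q - y‖ ≤ Metric.diam U := by
    rw [← dist_eq_norm, ← Metric.diam_closure]
    exact Metric.dist_le_diam_of_mem hUb.closure (frontier_subset_closure hq) (subset_closure hy)
  have hqy : ℓ (q - y) ≤ ‖ℓ‖ * Metric.diam U :=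
    (le_abs_self _).trans ((ℓ.le_opNorm _).trans (by gcongr))
  have hgy : ℓ (g y) ≤ ℓ (g q) := hmax (subset_closure hy)
  simp only [map_sub] at hqy ⊢
  linarith

end Frontier

theorem pi2_continuous : Continuous pi2 :=
  ((AddCircle.continuous_mk' (1 : ℝ)).comp continuous_fst).prodMk
    ((AddCircle.continuous_mk' (1 : ℝ)).comp continuous_snd)

theorem pi2_add_ivec (x : R2) (w : ℤ × ℤ) : pi2 (x + ivec w) = pi2 x := by
  simp [pi2, ivec]

theorem AddCircle.exists_eq_add_int_of_coe_eq {a b : ℝ} (h : (a : AddCircle (1 : ℝ)) = b) :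
    ∃ m : ℤ, a = b + m := by
  obtain ⟨m, hm⟩ := (AddCircle.coe_eq_zero_iff (1 : ℝ) (x := a - b)).1
    (by rw [AddCircle.coe_sub, h, sub_self])
  exact ⟨m, by simp only [zsmul_eq_mul, mul_one] at hm; linarith⟩

theorem exists_eq_add_ivec_of_pi2_eq {a b : R2} (h : pi2 a = pi2 b) :
    ∃ w : ℤ × ℤ, a = b + ivec w := by
  obtain ⟨m₁, h₁⟩ := AddCircle.exists_eq_add_int_of_coe_eq (congrArg Prod.fst h)
  obtain ⟨m₂, h₂⟩ := AddCircle.exists_eq_add_int_of_coe_eq (congrArg Prod.snd h)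
  exact ⟨(m₁, m₂), Prod.ext h₁ h₂⟩

theorem pi2_mem_frontier_image {U : Set R2} (hU : IsOpen U) (hinj : InjOn pi2 U) {q : R2}
    (hq : q ∈ frontier U) : pi2 q ∈ frontier (pi2 '' U) := by
  rw [hU.frontier_eq] at hq
  refine ⟨(mapsTo_image pi2 U).closure pi2_continuous hq.1, fun hqi => hq.2 ?_⟩
  obtain ⟨y, hy, hyq⟩ := interior_subset hqi
  obtain ⟨w, rfl⟩ := exists_eq_add_ivec_of_pi2_eq hyq.symm
  have hopen : IsOpen ((· + ivec w) '' U) := (Homeomorph.addRight (ivec w)).isOpenMap _ hU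
  obtain ⟨_, ⟨p, hp, rfl⟩, hpU⟩ := mem_closure_iff.1 hq.1 _ hopen (mem_image_of_mem _ hy)
  -- injectivity of `pi2` on `U` makes `U` disjoint from its nonzero integer translates
  have hw : ivec w = 0 := by simpa using hinj hpU hp (pi2_add_ivec p w)
  simpa [hw] using hy

noncomputable def dotRight (v : R2) : R2 →L[ℝ] ℝ :=
  v.1 • ContinuousLinearMap.fst ℝ ℝ ℝ + v.2 • ContinuousLinearMap.snd ℝ ℝ ℝ

@[simp]
theorem dotRight_apply (v a : R2) : dotRight v a = dot a v := by
  simp [dotRight, dot, mul_comm]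

theorem stmt12_general
    (ftilde : R2 ≃ₜ R2)
    (hcomm : ∀ (x : R2) (w : ℤ × ℤ), ftilde (x + ivec w) = ftilde x + ivec w)
    (v : R2) (hv : dot v v = 1)
    (W : Set T2)
    (k : ℕ) (D : Fin k → Set T2)
    (hcover : Wᶜ ⊆ ⋃ i, D i)
    (hfrontier : ∀ i, frontier (D i) ⊆ W)
    (hDlift : ∀ i, ∃ Dt : Set R2, IsOpen Dt ∧ Bornology.IsBounded Dt ∧
      pi2 '' Dt = D i ∧ Set.InjOn pi2 Dt)
    (R : ℝ) (hR : 0 < R)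
    (hbdW : ∀ x : R2, pi2 x ∈ W → ∀ n : ℕ, dot ((⇑ftilde)^[n] x - x) v ≤ R) :
    ∃ R' : ℝ, 0 < R' ∧ ∀ (x : R2) (n : ℕ), dot ((⇑ftilde)^[n] x - x) v ≤ R' := by
  choose Dt hDtopen hDtbdd hDtim hDtinj using hDlift
  have hℓ : dotRight v ≠ 0 := fun h => by simpa [hv] using congrArg (· v) h
  set C := ‖dotRight v‖ * ∑ i, Metric.diam (Dt i)
  have hC : 0 ≤ C := by positivity
  refine ⟨R + C, by positivity, fun x n => ?_⟩
  by_cases hxW : pi2 x ∈ W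
  · linarith [hbdW x hxW n]
  obtain ⟨i, hxD⟩ := mem_iUnion.1 (hcover hxW)
  obtain ⟨y, hy, hyx⟩ := (hDtim i).symm ▸ hxD
  obtain ⟨w, rfl⟩ := exists_eq_add_ivec_of_pi2_eq hyx.symm
  rw [Function.Commute.iterate_left (fun x => hcomm x w) n y, add_sub_add_right_eq_sub]
  obtain ⟨q, hq, hle⟩ := exists_mem_frontier_displacement_le (ftilde.continuous.iterate n)
    (ftilde.isOpenMap.iterate n) hℓ (hDtopen i) (hDtbdd i) hy
  have hqW : pi2 q ∈ W := hfrontier i (hDtim i ▸ pi2_mem_frontier_image (hDtopen i) (hDtinj i) hq)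
  have hdiam : ‖dotRight v‖ * Metric.diam (Dt i) ≤ C := mul_le_mul_of_nonneg_left
    (Finset.single_le_sum (fun j _ => Metric.diam_nonneg) (Finset.mem_univ i)) (norm_nonneg _)
  simp only [dotRight_apply] at hle
  linarith [hbdW q hqW n]

/-- If the complement of an open invariant set `W ⊂ T²` is covered by finitely many open
topological disks with boundaries in `W`, each lifting homeomorphically to a bounded set
in `ℝ²`, and the forward displacements in the direction `v` of all points of `W` are
uniformly bounded by `R`, then they are uniformly bounded for all points of `ℝ²`. -/
theorem stmt12 (f : T2 → T2) (hf : Continuous f)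
    (ftilde : R2 ≃ₜ R2)
    (hcomm : ∀ (x : R2) (w : ℤ × ℤ), ftilde (x + ivec w) = ftilde x + ivec w)
    (hlift : ∀ x : R2, pi2 (ftilde x) = f (pi2 x))
    (v : R2) (hv : dot v v = 1)
    (W : Set T2) (hWopen : IsOpen W) (hWinv : f '' W = W)
    (k : ℕ) (D : Fin k → Set T2)
    (hcover : Wᶜ ⊆ ⋃ i, D i)
    (hDopen : ∀ i, IsOpen (D i))
    (hfrontier : ∀ i, frontier (D i) ⊆ W)
    (hDlift : ∀ i, ∃ Dt : Set R2, IsOpen Dt ∧ Bornology.IsBounded Dt ∧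
      pi2 '' Dt = D i ∧ Set.InjOn pi2 Dt)
    (R : ℝ) (hR : 0 < R)
    (hbdW : ∀ x : R2, pi2 x ∈ W → ∀ n : ℕ, dot ((⇑ftilde)^[n] x - x) v ≤ R) :
    ∃ R' : ℝ, 0 < R' ∧ ∀ (x : R2) (n : ℕ), dot ((⇑ftilde)^[n] x - x) v ≤ R' :=
  stmt12_general ftilde hcomm v hv W k D hcover hfrontier hDlift R hR hbdW
end
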